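/- arXiv:2109.04700 — 5 statements merged into one kernel-verified Lean document; each statement's English description precedes it below -/
import Mathlib

section
/- On an n-dimensional α-cosymplectic manifold M with Levi-Civita connection ∇ and quarter-symmetric metric connection ∇̃_X Y = ∇_X Y − η(X)φY, the curvature tensor R̃ of ∇̃ satisfies R̃(X,Y)Z = R(X,Y)Z + αη(X)g(φY,Z)ξ − αη(Y)g(φX,Z)ξ − αη(X)η(Z)φY + αη(Y)η(Z)φX, where R is the curvature tensor of ∇. -/
/-- On an α-cosymplectic manifold, the curvature tensor `R̃` of the quarter-symmetric
metric connection `∇̃_X Y = ∇_X Y − η(X)φY` satisfies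
`R̃(X,Y)Z = R(X,Y)Z + αη(X)g(φY,Z)ξ − αη(Y)g(φX,Z)ξ − αη(X)η(Z)φY + αη(Y)η(Z)φX`. -/
theorem quarter_symmetric_curvature_formula
    {C V : Type*} [CommRing C] [Algebra ℝ C] [AddCommGroup V] [Module C V]
    (g : V →ₗ[C] V →ₗ[C] C) (φ : V →ₗ[C] V) (η : V →ₗ[C] C) (ξ : V) (a : ℝ)
    (br : V → V → V) (nabla : V → V → V) (Xact : V → C → C)
    -- α as an element of the function ring (a real constant)
    (α : C) (hαconst : α = algebraMap ℝ C a)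
    -- almost contact metric structure
    (hφ2 : ∀ X, φ (φ X) = -X + η X • ξ)
    (hηξ : η ξ = 1)
    (hηφ : ∀ X, η (φ X) = 0)
    (hφξ : φ ξ = 0)
    (hgφφ : ∀ X Y, g (φ X) (φ Y) = g X Y - η X * η Y)
    (hgξ : ∀ X, g X ξ = η X)
    (hgsym : ∀ X Y, g X Y = g Y X)
    -- Levi-Civita connection: torsion-free, metric, additive and Leibniz in the second argument
    (htf : ∀ X Y, nabla X Y - nabla Y X = br X Y)
    (hmet : ∀ X Y Z, Xact X (g Y Z) = g (nabla X Y) Z + g Y (nabla X Z))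
    (hadd : ∀ X Y Z, nabla X (Y + Z) = nabla X Y + nabla X Z)
    (hLeib : ∀ X (f : C) Y, nabla X (f • Y) = f • nabla X Y + Xact X f • Y)
    -- α-cosymplectic structure: (∇_X φ)Y = α[g(φX,Y)ξ − η(Y)φX], hence ∇_X ξ = α[X − η(X)ξ]
    (hacs : ∀ X Y, nabla X (φ Y) - φ (nabla X Y) = (α * g (φ X) Y) • ξ - (α * η Y) • φ X)
    (hnablaξ : ∀ X, nabla X ξ = α • (X - η X • ξ))
    -- quarter-symmetric metric connection and the two curvature tensors
    (nablat : V → V → V)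
    (hq : ∀ X Y, nablat X Y = nabla X Y - η X • φ Y)
    (R Rt : V → V → V → V)
    (hR : ∀ X Y Z, R X Y Z = nabla X (nabla Y Z) - nabla Y (nabla X Z) - nabla (br X Y) Z)
    (hRt : ∀ X Y Z, Rt X Y Z = nablat X (nablat Y Z) - nablat Y (nablat X Z) - nablat (br X Y) Z) :
    ∀ X Y Z, Rt X Y Z = R X Y Z
      + (α * η X * g (φ Y) Z) • ξ - (α * η Y * g (φ X) Z) • ξ
      - (α * η X * η Z) • φ Y + (α * η Y * η Z) • φ X := by
  intro X Y Z
  have key : ∀ U W, Xact U (η W) = η (nabla U W) + α * (g U W - η U * η W) := by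
    intro U W
    have h1 := hmet U W ξ
    simp only [hgξ, hnablaξ, map_sub, map_smul, smul_eq_mul, hgsym W U] at h1
    linear_combination h1
  have hnφ : ∀ U W, nabla U (φ W)
      = φ (nabla U W) + ((α * g (φ U) W) • ξ - (α * η W) • φ U) := by
    intro U W
    have h := hacs U W
    have h2 : nabla U (φ W) = φ (nabla U W) + (nabla U (φ W) - φ (nabla U W)) := by module
    rw [h2, h]
  have hsub : ∀ U A (f : C) B, nabla U (A - f • B)
      = nabla U A - f • nabla U B - Xact U f • B := by
    intro U A f B
    have h := hadd U (A - f • B) (f • B)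
    rw [sub_add_cancel, hLeib] at h
    rw [h]; module
  have hbr : η (br X Y) = η (nabla X Y) - η (nabla Y X) := by
    rw [← htf, map_sub]
  have hk1 := key X Y
  have hk2 := key Y X
  rw [hgsym Y X] at hk2
  simp only [hRt, hq, hR]
  rw [hsub X (nabla Y Z) (η Y) (φ Z), hsub Y (nabla X Z) (η X) (φ Z)]
  simp only [map_sub, map_smul, hφ2, hbr, hk1, hk2, hnφ]
  module
end

section
/- Let M be an n-dimensional α-cosymplectic manifold whose metric admits a *-η-Ricci-Yamabe soliton (g, ξ, Λ, μ, ρ, q) with respect to the quarter-symmetric metric connection ∇̃, i.e., (£̃_ξ g)(Y,Z) + 2ρ S̃*(Y,Z) + [2Λ − q r̃*] g(Y,Z) + 2μ η(Y)η(Z) = 0, where S̃*(Y,Z) = S̃(Y,Z) + α²(n−2)g(Y,Z) + α²η(Y)η(Z) and r̃* = r̃ + α²(n−1)². Then the soliton constants satisfy Λ + μ = (q r)/2 + (q α²(n−1)²)/2, where r is the scalar curvature of the Levi-Civita connection. -/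
/-- If an n-dimensional α-cosymplectic manifold admits a *-η-Ricci-Yamabe soliton
`(g, ξ, Λ, μ, ρ, q)` with respect to the quarter-symmetric metric connection, then
`Λ + μ = qr/2 + qα²(n−1)²/2`. -/
theorem star_eta_RY_soliton_constants_relation
    {V : Type*} [AddCommGroup V] [Module ℝ V]
    (g : V →ₗ[ℝ] V →ₗ[ℝ] ℝ) (φ : V →ₗ[ℝ] V) (η : V →ₗ[ℝ] ℝ) (ξ : V)
    (α Λ μ ρ q r : ℝ) (n : ℕ)
    -- almost contact metric structure
    (hηξ : η ξ = 1)
    (hηφ : ∀ X, η (φ X) = 0)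
    (hφξ : φ ξ = 0)
    (hgξ : ∀ X, g X ξ = η X)
    (hgsym : ∀ X Y, g X Y = g Y X)
    -- Ricci data on the α-cosymplectic manifold
    (S St Sts : V → V → ℝ) (rt rts : ℝ)
    (hSξ : ∀ Y, S Y ξ = -α ^ 2 * ((n : ℝ) - 1) * η Y)
    (hSt : ∀ Y Z, St Y Z = S Y Z + α * g (φ Y) Z)
    (hrt : rt = r)
    -- the *-Ricci tensor and *-scalar curvature of the quarter-symmetric connection
    (hSts : ∀ Y Z, Sts Y Z = St Y Z + α ^ 2 * ((n : ℝ) - 2) * g Y Z + α ^ 2 * η Y * η Z)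
    (hrts : rts = rt + α ^ 2 * ((n : ℝ) - 1) ^ 2)
    -- Lie derivative of g along ξ w.r.t. the quarter-symmetric connection
    (Ltξ : V → V → ℝ)
    (hLt : ∀ Y Z, Ltξ Y Z = 2 * α * (g Y Z - η Y * η Z))
    -- the *-η-Ricci-Yamabe soliton equation w.r.t. the quarter-symmetric connection
    (hsoliton : ∀ Y Z,
      Ltξ Y Z + 2 * ρ * Sts Y Z + (2 * Λ - q * rts) * g Y Z + 2 * μ * η Y * η Z = 0) :
    Λ + μ = q * r / 2 + q * α ^ 2 * ((n : ℝ) - 1) ^ 2 / 2 := by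
  have h := hsoliton ξ ξ
  rw [hLt, hSts, hSt, hSξ, hφξ, hgξ, hηξ, hrts, hrt] at h
  simp only [map_zero, LinearMap.zero_apply] at h
  nlinarith [h]
end

section
/- Let M be an n-dimensional α-cosymplectic manifold whose metric admits a *-η-Ricci-Yamabe soliton with ρ ≠ 0 with respect to both the Levi-Civita connection ∇ and the quarter-symmetric metric connection ∇̃ (with the same constants Λ, μ, ρ, q). Then αρ g(φY, Z) = 0 for all vector fields Y, Z; hence α = 0 and M is cosymplectic. -/
/-- If an n-dimensional α-cosymplectic manifold admits a *-η-Ricci-Yamabe soliton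
with `ρ ≠ 0` with respect to both the Levi-Civita connection and the quarter-symmetric metric
connection (same constants), then `αρ g(φY,Z) = 0` for all `Y, Z`; hence `α = 0` and the manifold
is cosymplectic. -/
theorem star_eta_RY_soliton_both_connections
    {V : Type*} [AddCommGroup V] [Module ℝ V]
    (g : V →ₗ[ℝ] V →ₗ[ℝ] ℝ) (φ : V →ₗ[ℝ] V) (η : V →ₗ[ℝ] ℝ) (ξ : V)
    (α Λ μ ρ q r : ℝ) (n : ℕ)
    (hρ : ρ ≠ 0)
    -- g is nondegenerate and φ is nonzero (φ has rank n−1)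
    (hnd : ∀ Z : V, (∀ W, g Z W = 0) → Z = 0)
    (hφne : φ ≠ 0)
    -- Ricci data
    (S St Sstar Ststar : V → V → ℝ) (rt rstar rtstar : ℝ)
    (hSt : ∀ Y Z, St Y Z = S Y Z + α * g (φ Y) Z)
    (hrt : rt = r)
    (hSstar : ∀ Y Z, Sstar Y Z = S Y Z + α ^ 2 * ((n : ℝ) - 2) * g Y Z + α ^ 2 * η Y * η Z)
    (hrstar : rstar = r + α ^ 2 * ((n : ℝ) - 1) ^ 2)
    (hStstar : ∀ Y Z, Ststar Y Z = St Y Z + α ^ 2 * ((n : ℝ) - 2) * g Y Z + α ^ 2 * η Y * η Z)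
    (hrtstar : rtstar = rt + α ^ 2 * ((n : ℝ) - 1) ^ 2)
    -- the Lie derivative of g along ξ (the same for ∇ and ∇̃)
    (Lξ : V → V → ℝ)
    -- soliton equation w.r.t. the Levi-Civita connection
    (hsol : ∀ Y Z,
      Lξ Y Z + 2 * ρ * Sstar Y Z + (2 * Λ - q * rstar) * g Y Z + 2 * μ * η Y * η Z = 0)
    -- soliton equation w.r.t. the quarter-symmetric metric connection
    (hsolt : ∀ Y Z,
      Lξ Y Z + 2 * ρ * Ststar Y Z + (2 * Λ - q * rtstar) * g Y Z + 2 * μ * η Y * η Z = 0) :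
    (∀ Y Z, α * ρ * g (φ Y) Z = 0) ∧ α = 0 := by
  have key : ∀ Y Z, α * ρ * g (φ Y) Z = 0 := by
    intro Y Z
    have h1 := hsol Y Z
    have h2 := hsolt Y Z
    rw [hSstar] at h1
    rw [hStstar, hSt, hrtstar, hrt] at h2
    rw [hrstar] at h1
    have : 2 * ρ * (α * g (φ Y) Z) = 0 := by linarith
    have hρ2 : (2:ℝ) * ρ ≠ 0 := by
      intro h; apply hρ; linarith
    have := mul_eq_zero.mp this
    rcases this with h | h
    · exact absurd h hρ2
    · linarith [mul_eq_zero.mp h]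
  refine ⟨key, ?_⟩
  by_contra hα
  apply hφne
  ext Y
  simp only [LinearMap.zero_apply]
  apply hnd
  intro W
  have := key Y W
  rcases mul_eq_zero.mp this with h | h
  · rcases mul_eq_zero.mp h with h | h
    · exact absurd h hα
    · exact absurd h hρ
  · exact h
end

section
/- Let M be an n-dimensional α-cosymplectic manifold admitting a *-η-Ricci-Yamabe soliton (g, V, Λ, μ, ρ, q) with respect to the quarter-symmetric metric connection, where the potential vector field V is conformal Killing: (£_V g)(Y,Z) = 2θ g(Y,Z) for some function θ. Then φV = [2θ + 2Λ + 2μ − qr − qα²(n−1)²] ξ. -/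
/-- If an n-dimensional α-cosymplectic manifold admits a *-η-Ricci-Yamabe soliton
`(g, V, Λ, μ, ρ, q)` w.r.t. the quarter-symmetric metric connection and the potential vector
field `V` is conformal Killing (`£_V g = 2θ g`), then
`φV = [2θ + 2Λ + 2μ − qr − qα²(n−1)²] ξ`. -/
theorem star_eta_RY_soliton_conformal_killing
    {E : Type*} [AddCommGroup E] [Module ℝ E]
    (g : E →ₗ[ℝ] E →ₗ[ℝ] ℝ) (φ : E →ₗ[ℝ] E) (η : E →ₗ[ℝ] ℝ) (ξ : E) (V : E)
    (α Λ μ ρ q r θ : ℝ) (n : ℕ)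
    -- almost contact metric structure
    (hηξ : η ξ = 1)
    (hηφ : ∀ X, η (φ X) = 0)
    (hφξ : φ ξ = 0)
    (hgξ : ∀ X, g X ξ = η X)
    (hgsym : ∀ X Y, g X Y = g Y X)
    -- nondegeneracy of the metric
    (hnd : ∀ Z : E, (∀ W, g Z W = 0) → Z = 0)
    -- Ricci tensor of the α-cosymplectic manifold
    (S : E → E → ℝ)
    (hSξ : ∀ Y, S Y ξ = -α ^ 2 * ((n : ℝ) - 1) * η Y)
    -- Lie derivative of g along V; V is a conformal Killing vector field
    (LV : E → E → ℝ)
    (hCK : ∀ Y Z, LV Y Z = 2 * θ * g Y Z)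
    -- the soliton equation w.r.t. the quarter-symmetric metric connection
    (hsoliton : ∀ Y Z,
      LV Y Z - η Y * g (φ V) Z - η Z * g Y (φ V)
        + 2 * ρ * (S Y Z + α * g (φ Y) Z)
        + (2 * Λ + 2 * α ^ 2 * ρ * ((n : ℝ) - 2) - q * r
            - q * α ^ 2 * ((n : ℝ) - 1) ^ 2) * g Y Z
        + (2 * μ + 2 * α ^ 2 * ρ) * η Y * η Z = 0) :
    φ V = (2 * θ + 2 * Λ + 2 * μ - q * r - q * α ^ 2 * ((n : ℝ) - 1) ^ 2) • ξ := by
  set c := 2 * θ + 2 * Λ + 2 * μ - q * r - q * α ^ 2 * ((n : ℝ) - 1) ^ 2 with hc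
  have key : ∀ Y, g Y (φ V) = c * η Y := by
    intro Y
    have h := hsoliton Y ξ
    rw [hCK, hgξ, hSξ, hgξ, hgξ, hηξ, hηφ, hηφ] at h
    simp only [hc]
    linarith [h]
  have hzero : φ V - c • ξ = 0 := by
    apply hnd
    intro W
    have h1 : g (φ V) W = c * η W := by rw [hgsym]; exact key W
    have h2 : g ξ W = η W := by rw [hgsym, hgξ]
    simp [map_sub, LinearMap.sub_apply, h1, h2, LinearMap.smul_apply]
  have := sub_eq_zero.mp hzero
  exact this
end

section
/- For the 5-dimensional α-cosymplectic manifold M = ℝ⁵ with frame e₁ = e^{αv}∂_x, …, e₅ = −∂_v and quarter-symmetric metric connection ∇̃_X Y = ∇_X Y − η(X)φY (where φe₁ = −e₂, φe₂ = e₁, φe₃ = −e₄, φe₄ = e₃, φe₅ = 0, η = g(·, e₅)), the Ricci tensor of ∇̃ satisfies S̃(eᵢ, eᵢ) = −4α² for i = 1, …, 5, and the scalar curvature of ∇̃ equals that of ∇: r̃ = −20α² = r. -/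
set_option maxHeartbeats 2000000 in
/-- For the 5-dimensional α-cosymplectic manifold M = ℝ⁵ with the given frame and
the quarter-symmetric metric connection `∇̃_X Y = ∇_X Y − η(X)φY`, the Ricci tensor of `∇̃`
satisfies `S̃(eᵢ, eᵢ) = −4α²` for all `i`, and `r̃ = −20α² = r`. -/
theorem example_R5_quarter_symmetric_ricci
    {V : Type*} [AddCommGroup V] [Module ℝ V] (α : ℝ)
    (g : V →ₗ[ℝ] V →ₗ[ℝ] ℝ) (φ : V →ₗ[ℝ] V) (η : V →ₗ[ℝ] ℝ)
    (br : V →ₗ[ℝ] V →ₗ[ℝ] V) (nabla : V → V → V)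
    -- the frame
    (e : Fin 5 → V)
    (horth : ∀ i j, g (e i) (e j) = if i = j then 1 else 0)
    (hcompl : ∀ W : V, W = ∑ i, g W (e i) • e i)
    (hgsym : ∀ X Y, g X Y = g Y X)
    -- the Lie brackets
    (hbr5 : ∀ i : Fin 5, i ≠ 4 → br (e i) (e 4) = α • e i)
    (hbr0 : ∀ i j : Fin 5, i ≠ 4 → j ≠ 4 → br (e i) (e j) = 0)
    (hbrskew : ∀ X Y, br X Y = -br Y X)
    -- η = g(·, e₅) and φ on the frame
    (hηdef : ∀ X, η X = g X (e 4))
    (hφ0 : φ (e 0) = -(e 1)) (hφ1 : φ (e 1) = e 0)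
    (hφ2 : φ (e 2) = -(e 3)) (hφ3 : φ (e 3) = e 2) (hφ4 : φ (e 4) = 0)
    -- the Levi-Civita connection via the Koszul formula
    (hKoszul : ∀ X Y Z,
      2 * g (nabla X Y) Z = -(g X (br Y Z)) - g Y (br X Z) + g Z (br X Y))
    -- the quarter-symmetric metric connection
    (nablat : V → V → V)
    (hq : ∀ X Y, nablat X Y = nabla X Y - η X • φ Y)
    -- its curvature, Ricci tensor and scalar curvature, and the Levi-Civita data
    (R Rt : V → V → V → V)
    (hR : ∀ X Y Z, R X Y Z = nabla X (nabla Y Z) - nabla Y (nabla X Z) - nabla (br X Y) Z)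
    (hRt : ∀ X Y Z, Rt X Y Z = nablat X (nablat Y Z) - nablat Y (nablat X Z) - nablat (br X Y) Z)
    (S St : V → V → ℝ)
    (hS : ∀ Y Z, S Y Z = ∑ i, g (R (e i) Y Z) (e i))
    (hSt : ∀ Y Z, St Y Z = ∑ i, g (Rt (e i) Y Z) (e i))
    (r rt : ℝ)
    (hr : r = ∑ i, S (e i) (e i))
    (hrt : rt = ∑ i, St (e i) (e i)) :
    (∀ i : Fin 5, St (e i) (e i) = -4 * α ^ 2) ∧ rt = -20 * α ^ 2 ∧ rt = r := by
  -- η on the frame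
  have hηe : ∀ i : Fin 5, η (e i) = if i = 4 then 1 else 0 := by
    intro i; rw [hηdef, horth]
  -- bracket on the frame
  have brval : ∀ i j : Fin 5, br (e i) (e j) = (α * η (e j)) • e i - (α * η (e i)) • e j := by
    intro i j
    rw [hηe, hηe]
    by_cases hi : i = 4 <;> by_cases hj : j = 4
    · subst hi; subst hj
      have h1 := hbrskew (e 4) (e 4)
      have h2 : (2:ℝ) • br (e 4) (e 4) = 0 := by
        rw [two_smul]; nth_rewrite 1 [h1]; abel
      have h3 : br (e 4) (e 4) = 0 := by
        rcases smul_eq_zero.mp h2 with h | h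
        · norm_num at h
        · exact h
      simp [h3]
    · subst hi
      rw [hbrskew, hbr5 j hj]
      simp [hj]
    · subst hj
      rw [hbr5 i hi]
      simp [hi]
    · rw [hbr0 i j hi hj]
      simp [hi, hj]
  -- bracket in general
  have Lbr : ∀ X Y, br X Y = (α * η Y) • X - (α * η X) • Y := by
    intro X Y
    rw [hcompl X, hcompl Y]
    simp only [map_sum, map_add, map_smul, map_sub, map_neg, LinearMap.sum_apply,
      LinearMap.add_apply, LinearMap.smul_apply, LinearMap.sub_apply, LinearMap.neg_apply,
      smul_eq_mul, Fin.sum_univ_five, Fin.isValue, brval, hηe, Fin.reduceEq, reduceIte]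
    module
  -- the Levi-Civita connection pairing with any Z
  have Lg : ∀ X Y Z, g (nabla X Y) Z = g ((α * η Y) • X - (α * g X Y) • e 4) Z := by
    intro X Y Z
    have hk := hKoszul X Y Z
    rw [Lbr, Lbr, Lbr] at hk
    simp only [map_sub, map_smul, smul_eq_mul, LinearMap.sub_apply, LinearMap.smul_apply] at hk ⊢
    rw [hηdef X, hηdef Y, hηdef Z] at hk
    rw [hgsym Y X, hgsym Z X, hgsym Z Y] at hk
    rw [hηdef Y, hgsym (e 4) Z]
    linarith [hk]
  -- the Levi-Civita connection
  have Lnabla : ∀ X Y, nabla X Y = (α * η Y) • X - (α * g X Y) • e 4 := by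
    intro X Y
    calc nabla X Y = ∑ i, g (nabla X Y) (e i) • e i := hcompl _
    _ = ∑ i, g ((α * η Y) • X - (α * g X Y) • e 4) (e i) • e i := by
        simp only [Lg]
    _ = (α * η Y) • X - (α * g X Y) • e 4 := (hcompl _).symm
  -- Ricci of the quarter-symmetric connection on the frame diagonal
  have key : ∀ j : Fin 5, St (e j) (e j) = -4 * α ^ 2 := by
    intro j
    fin_cases j
    · show St (e 0) (e 0) = -4 * α ^ 2
      rw [hSt, Fin.sum_univ_five]
      simp only [hRt, hq, Lnabla, Lbr, hηe, horth, hφ0, hφ1, hφ2, hφ3, hφ4,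
        map_sum, map_add, map_smul, map_sub, map_neg, map_zero, LinearMap.sum_apply,
        LinearMap.add_apply, LinearMap.smul_apply, LinearMap.sub_apply, LinearMap.neg_apply,
        LinearMap.zero_apply, smul_eq_mul, smul_sub, smul_add, smul_smul, smul_zero, zero_smul,
        smul_neg, neg_smul, Fin.isValue, Fin.reduceEq, reduceIte, if_true, if_false,
        mul_zero, zero_mul, mul_one, one_mul]
      ring
    · show St (e 1) (e 1) = -4 * α ^ 2
      rw [hSt, Fin.sum_univ_five]
      simp only [hRt, hq, Lnabla, Lbr, hηe, horth, hφ0, hφ1, hφ2, hφ3, hφ4,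
        map_sum, map_add, map_smul, map_sub, map_neg, map_zero, LinearMap.sum_apply,
        LinearMap.add_apply, LinearMap.smul_apply, LinearMap.sub_apply, LinearMap.neg_apply,
        LinearMap.zero_apply, smul_eq_mul, smul_sub, smul_add, smul_smul, smul_zero, zero_smul,
        smul_neg, neg_smul, Fin.isValue, Fin.reduceEq, reduceIte, if_true, if_false,
        mul_zero, zero_mul, mul_one, one_mul]
      ring
    · show St (e 2) (e 2) = -4 * α ^ 2
      rw [hSt, Fin.sum_univ_five]
      simp only [hRt, hq, Lnabla, Lbr, hηe, horth, hφ0, hφ1, hφ2, hφ3, hφ4,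
        map_sum, map_add, map_smul, map_sub, map_neg, map_zero, LinearMap.sum_apply,
        LinearMap.add_apply, LinearMap.smul_apply, LinearMap.sub_apply, LinearMap.neg_apply,
        LinearMap.zero_apply, smul_eq_mul, smul_sub, smul_add, smul_smul, smul_zero, zero_smul,
        smul_neg, neg_smul, Fin.isValue, Fin.reduceEq, reduceIte, if_true, if_false,
        mul_zero, zero_mul, mul_one, one_mul]
      ring
    · show St (e 3) (e 3) = -4 * α ^ 2
      rw [hSt, Fin.sum_univ_five]
      simp only [hRt, hq, Lnabla, Lbr, hηe, horth, hφ0, hφ1, hφ2, hφ3, hφ4,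
        map_sum, map_add, map_smul, map_sub, map_neg, map_zero, LinearMap.sum_apply,
        LinearMap.add_apply, LinearMap.smul_apply, LinearMap.sub_apply, LinearMap.neg_apply,
        LinearMap.zero_apply, smul_eq_mul, smul_sub, smul_add, smul_smul, smul_zero, zero_smul,
        smul_neg, neg_smul, Fin.isValue, Fin.reduceEq, reduceIte, if_true, if_false,
        mul_zero, zero_mul, mul_one, one_mul]
      ring
    · show St (e 4) (e 4) = -4 * α ^ 2
      rw [hSt, Fin.sum_univ_five]
      simp only [hRt, hq, Lnabla, Lbr, hηe, horth, hφ0, hφ1, hφ2, hφ3, hφ4,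
        map_sum, map_add, map_smul, map_sub, map_neg, map_zero, LinearMap.sum_apply,
        LinearMap.add_apply, LinearMap.smul_apply, LinearMap.sub_apply, LinearMap.neg_apply,
        LinearMap.zero_apply, smul_eq_mul, smul_sub, smul_add, smul_smul, smul_zero, zero_smul,
        smul_neg, neg_smul, Fin.isValue, Fin.reduceEq, reduceIte, if_true, if_false,
        mul_zero, zero_mul, mul_one, one_mul]
      ring
  -- Ricci of the Levi-Civita connection on the frame diagonal
  have keyS : ∀ j : Fin 5, S (e j) (e j) = -4 * α ^ 2 := by
    intro j
    fin_cases j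
    · show S (e 0) (e 0) = -4 * α ^ 2
      rw [hS, Fin.sum_univ_five]
      simp only [hR, Lnabla, Lbr, hηe, horth, hφ0, hφ1, hφ2, hφ3, hφ4,
        map_sum, map_add, map_smul, map_sub, map_neg, map_zero, LinearMap.sum_apply,
        LinearMap.add_apply, LinearMap.smul_apply, LinearMap.sub_apply, LinearMap.neg_apply,
        LinearMap.zero_apply, smul_eq_mul, smul_sub, smul_add, smul_smul, smul_zero, zero_smul,
        smul_neg, neg_smul, Fin.isValue, Fin.reduceEq, reduceIte, if_true, if_false,
        mul_zero, zero_mul, mul_one, one_mul]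
      ring
    · show S (e 1) (e 1) = -4 * α ^ 2
      rw [hS, Fin.sum_univ_five]
      simp only [hR, Lnabla, Lbr, hηe, horth, hφ0, hφ1, hφ2, hφ3, hφ4,
        map_sum, map_add, map_smul, map_sub, map_neg, map_zero, LinearMap.sum_apply,
        LinearMap.add_apply, LinearMap.smul_apply, LinearMap.sub_apply, LinearMap.neg_apply,
        LinearMap.zero_apply, smul_eq_mul, smul_sub, smul_add, smul_smul, smul_zero, zero_smul,
        smul_neg, neg_smul, Fin.isValue, Fin.reduceEq, reduceIte, if_true, if_false,
        mul_zero, zero_mul, mul_one, one_mul]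
      ring
    · show S (e 2) (e 2) = -4 * α ^ 2
      rw [hS, Fin.sum_univ_five]
      simp only [hR, Lnabla, Lbr, hηe, horth, hφ0, hφ1, hφ2, hφ3, hφ4,
        map_sum, map_add, map_smul, map_sub, map_neg, map_zero, LinearMap.sum_apply,
        LinearMap.add_apply, LinearMap.smul_apply, LinearMap.sub_apply, LinearMap.neg_apply,
        LinearMap.zero_apply, smul_eq_mul, smul_sub, smul_add, smul_smul, smul_zero, zero_smul,
        smul_neg, neg_smul, Fin.isValue, Fin.reduceEq, reduceIte, if_true, if_false,
        mul_zero, zero_mul, mul_one, one_mul]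
      ring
    · show S (e 3) (e 3) = -4 * α ^ 2
      rw [hS, Fin.sum_univ_five]
      simp only [hR, Lnabla, Lbr, hηe, horth, hφ0, hφ1, hφ2, hφ3, hφ4,
        map_sum, map_add, map_smul, map_sub, map_neg, map_zero, LinearMap.sum_apply,
        LinearMap.add_apply, LinearMap.smul_apply, LinearMap.sub_apply, LinearMap.neg_apply,
        LinearMap.zero_apply, smul_eq_mul, smul_sub, smul_add, smul_smul, smul_zero, zero_smul,
        smul_neg, neg_smul, Fin.isValue, Fin.reduceEq, reduceIte, if_true, if_false,
        mul_zero, zero_mul, mul_one, one_mul]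
      ring
    · show S (e 4) (e 4) = -4 * α ^ 2
      rw [hS, Fin.sum_univ_five]
      simp only [hR, Lnabla, Lbr, hηe, horth, hφ0, hφ1, hφ2, hφ3, hφ4,
        map_sum, map_add, map_smul, map_sub, map_neg, map_zero, LinearMap.sum_apply,
        LinearMap.add_apply, LinearMap.smul_apply, LinearMap.sub_apply, LinearMap.neg_apply,
        LinearMap.zero_apply, smul_eq_mul, smul_sub, smul_add, smul_smul, smul_zero, zero_smul,
        smul_neg, neg_smul, Fin.isValue, Fin.reduceEq, reduceIte, if_true, if_false,
        mul_zero, zero_mul, mul_one, one_mul]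
      ring
  refine ⟨key, ?_, ?_⟩
  · rw [hrt, Fin.sum_univ_five, key, key, key, key, key]; ring
  · rw [hrt, hr, Fin.sum_univ_five, Fin.sum_univ_five]
    rw [key, key, key, key, key, keyS, keyS, keyS, keyS, keyS]
end
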